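/- arXiv:2510.15099 — 2 statements merged into one kernel-verified Lean document; each statement's English description precedes it below -/
import Mathlib

section
/- For every even i ≥ 2, the sum of B_j over all odd j < i equals 2^i - 1, and for every odd i ≥ 3, the sum of B_j over all odd j < i equals 2^{i-1} - 1. -/
/-- The ABR base sequence: B 0 = 2, B 1 = 3, and for i ≥ 2,
    B i = 2^(i+1) - 1 - ∑_{j odd, j < i} B j. -/
def abrB : ℕ → ℕ
  | 0 => 2
  | 1 => 3
  | n + 2 =>
      2 ^ (n + 3) - 1 -
        ∑ j ∈ ((Finset.range (n + 2)).filter fun j => j % 2 = 1).attach, abrB j.1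
  decreasing_by
    exact Finset.mem_range.mp (Finset.mem_filter.mp j.2).1

/-- Extend a length-`n` bit string to all of ℕ by zeros. -/
def extBits (n : ℕ) (d : Fin n → Bool) : ℕ → Bool :=
  fun i => if h : i < n then d ⟨i, h⟩ else false

/-- The sign exponent ε: 1 iff i is even, i ≤ n - 2, d i = 1 and d (i+1) = 1. -/
def abrEps (n : ℕ) (d : ℕ → Bool) (i : ℕ) : ℕ :=
  if i % 2 = 0 ∧ i + 2 ≤ n ∧ d i = true ∧ d (i + 1) = true then 1 else 0

/-- ABR value of an n-bit string: ∑_{i<n} (-1)^{ε(i)} dᵢ Bᵢ. -/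
def abrVal (n : ℕ) (d : ℕ → Bool) : ℤ :=
  ∑ i ∈ Finset.range n, (-1) ^ abrEps n d i * (cond (d i) 1 0 : ℤ) * (abrB i : ℤ)

/-! For odd `i ≥ 3` the recursion makes `B i` exactly the amount that lifts the odd partial sum
`∑_{j odd, j < i} B j` to `2 ^ (i + 1) - 1`, while even indices leave that sum unchanged. Hence it
equals `2 ^ i - 1` at even `i ≥ 2`, and `2 ^ (i - 1) - 1 ≤ 2 ^ (i + 1) - 1` at odd `i`, so the
truncated subtraction in the recursion never cuts off. -/

open Finset

def abrOddSum (i : ℕ) : ℕ :=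
  ∑ j ∈ (range i).filter (fun j => j % 2 = 1), abrB j

lemma abrOddSum_succ_of_even {n : ℕ} (hn : n % 2 = 0) : abrOddSum (n + 1) = abrOddSum n := by
  rw [abrOddSum, range_add_one, filter_insert, if_neg (by omega), abrOddSum]

lemma abrOddSum_succ_of_odd {n : ℕ} (hn : n % 2 = 1) :
    abrOddSum (n + 1) = abrB n + abrOddSum n := by
  rw [abrOddSum, range_add_one, filter_insert, if_pos hn, sum_insert (by simp), abrOddSum]

lemma abrB_add_two (n : ℕ) : abrB (n + 2) = 2 ^ (n + 3) - 1 - abrOddSum (n + 2) := by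
  rw [abrB, sum_attach _ abrB, abrOddSum]

lemma abrOddSum_two_mul_add_two (k : ℕ) : abrOddSum (2 * k + 2) = 2 ^ (2 * k + 2) - 1 := by
  induction k with
  | zero => simp [abrOddSum, abrB, sum_filter, sum_range_succ]
  | succ k ih =>
    have hprev : abrOddSum (2 * k + 3) = 2 ^ (2 * k + 2) - 1 := by
      rw [abrOddSum_succ_of_even (by omega), ih]
    have hB : abrB (2 * k + 3) = 2 ^ (2 * k + 4) - 1 - abrOddSum (2 * k + 3) := abrB_add_two _
    have hpow : 2 ^ (2 * k + 4) = 4 * 2 ^ (2 * k + 2) := by ring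
    have hpos : 1 ≤ 2 ^ (2 * k + 2) := Nat.one_le_two_pow
    show abrOddSum (2 * k + 3 + 1) = 2 ^ (2 * k + 4) - 1
    rw [abrOddSum_succ_of_odd (by omega)]
    omega

theorem abr_odd_partial_sums (i : ℕ) :
    (2 ≤ i → i % 2 = 0 →
      ∑ j ∈ (Finset.range i).filter (fun j => j % 2 = 1), abrB j = 2 ^ i - 1) ∧
    (3 ≤ i → i % 2 = 1 →
      ∑ j ∈ (Finset.range i).filter (fun j => j % 2 = 1), abrB j = 2 ^ (i - 1) - 1) := by
  refine ⟨fun hi heven => ?_, fun hi hodd => ?_⟩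
  · obtain ⟨k, rfl⟩ : ∃ k, i = 2 * k + 2 := ⟨i / 2 - 1, by omega⟩
    exact abrOddSum_two_mul_add_two k
  · obtain ⟨k, rfl⟩ : ∃ k, i = 2 * k + 3 := ⟨i / 2 - 1, by omega⟩
    change abrOddSum (2 * k + 2 + 1) = _
    rw [abrOddSum_succ_of_even (by omega), abrOddSum_two_mul_add_two]
    rfl
end

section
/- For every n ≥ 2, the ABR evaluation map d ↦ ∑_{i=0}^{n-1} (-1)^{ε(i)} d_i B_i from bit strings of length n to integers is injective. -/
open Finset

theorem Finset.sum_range_two_mul {M : Type*} [AddCommMonoid M] (f : ℕ → M) (n : ℕ) :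
    ∑ i ∈ range (2 * n), f i = ∑ k ∈ range n, (f (2 * k) + f (2 * k + 1)) := by
  induction n with
  | zero => simp
  | succ n ih => rw [mul_add, mul_one, sum_range_succ, sum_range_succ, ih, sum_range_succ, add_assoc]

theorem Finset.sum_range_filter_odd {M : Type*} [AddCommMonoid M] (f : ℕ → M) (m : ℕ) :
    ∑ j ∈ range m with j % 2 = 1, f j = ∑ i ∈ range (m / 2), f (2 * i + 1) := by
  induction m with
  | zero => simp
  | succ m ih =>
    rw [range_add_one, filter_insert]
    obtain ⟨k, rfl | rfl⟩ := Nat.even_or_odd' m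
    · rw [if_neg (by omega), ih, show (2 * k + 1) / 2 = 2 * k / 2 by omega]
    · rw [if_pos (by omega), sum_insert (by simp), ih, show (2 * k + 1 + 1) / 2 = k + 1 by omega,
        show (2 * k + 1) / 2 = k by omega, sum_range_succ, add_comm]

theorem Nat.eq_of_sum_mul_pow_eq {b : ℕ} {f g : ℕ → ℕ} {K : ℕ} (hf : ∀ k < K, f k < b)
    (hg : ∀ k < K, g k < b)
    (h : ∑ k ∈ range K, f k * b ^ k = ∑ k ∈ range K, g k * b ^ k) : ∀ k < K, f k = g k := by
  induction K generalizing f g with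
  | zero => simp
  | succ K ih =>
    have peel : ∀ u : ℕ → ℕ,
        ∑ k ∈ range (K + 1), u k * b ^ k = u 0 + b * ∑ k ∈ range K, u (k + 1) * b ^ k := by
      intro u
      rw [sum_range_succ', mul_sum, add_comm]
      simp only [pow_succ, pow_zero, mul_one]
      congr 1
      exact sum_congr rfl fun _ _ => by ring
    rw [peel f, peel g] at h
    have hb : 0 < b := (hf 0 K.succ_pos).pos
    have h0 : f 0 = g 0 := by
      simpa [Nat.add_mul_mod_self_left, Nat.mod_eq_of_lt (hf 0 K.succ_pos),
        Nat.mod_eq_of_lt (hg 0 K.succ_pos)] using congrArg (· % b) h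
    rw [h0, Nat.add_left_cancel_iff, Nat.mul_left_cancel_iff hb] at h
    have htail := ih (fun k hk => hf (k + 1) (by omega)) (fun k hk => hg (k + 1) (by omega)) h
    rintro (_ | k) hk
    · exact h0
    · exact htail k (by omega)

theorem abrB_zero : abrB 0 = 2 := by rw [abrB]

theorem abrB_add_two_s8 (m : ℕ) :
    abrB (m + 2) = 2 ^ (m + 3) - 1 - ∑ i ∈ range ((m + 2) / 2), abrB (2 * i + 1) := by
  rw [abrB, sum_attach _ abrB, sum_range_filter_odd]

theorem sum_three_mul_four_pow_add_one (k : ℕ) : ∑ i ∈ range k, 3 * 4 ^ i + 1 = 4 ^ k := by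
  rw [← mul_sum, mul_comm]
  exact geom_sum_mul_add 3 k

theorem abrB_odd (k : ℕ) : abrB (2 * k + 1) = 3 * 4 ^ k := by
  induction k using Nat.strong_induction_on with
  | _ k ih =>
    cases k with
    | zero => norm_num [abrB]
    | succ k =>
      rw [show 2 * (k + 1) + 1 = 2 * k + 1 + 2 by ring, abrB_add_two_s8,
        show (2 * k + 1 + 2) / 2 = k + 1 by omega,
        sum_congr rfl fun i hi => ih i (by simp at hi; omega)]
      have hgeom := sum_three_mul_four_pow_add_one (k + 1)
      have hpow : 2 ^ (2 * k + 1 + 3) = 4 * 4 ^ (k + 1) := by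
        rw [show 2 * k + 1 + 3 = 2 * (k + 2) by ring, pow_mul, pow_succ]; ring
      omega

theorem abrB_even (k : ℕ) : abrB (2 * (k + 1)) = 4 ^ (k + 1) := by
  rw [show 2 * (k + 1) = 2 * k + 2 by ring, abrB_add_two_s8, show (2 * k + 2) / 2 = k + 1 by omega,
    sum_congr rfl fun i _ => abrB_odd i]
  have hgeom := sum_three_mul_four_pow_add_one (k + 1)
  have hpow : 2 ^ (2 * k + 3) = 2 * 4 ^ (k + 1) := by
    rw [show 2 * k + 3 = 2 * (k + 1) + 1 by ring, pow_succ, pow_mul]; ring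
  omega

def abrPairDigit : ℕ → Bool → Bool → ℕ
  | _, false, false => 0
  | 0, true, false => 2
  | _ + 1, true, false => 1
  | _, false, true => 3
  | 0, true, true => 1
  | _ + 1, true, true => 2

theorem abrPairDigit_lt_four (k : ℕ) (a b : Bool) : abrPairDigit k a b < 4 := by
  cases k <;> cases a <;> cases b <;> simp [abrPairDigit]

theorem abrPairDigit_inj {k : ℕ} {a b a' b' : Bool}
    (h : abrPairDigit k a b = abrPairDigit k a' b') : a = a' ∧ b = b' := by
  cases k <;> cases a <;> cases b <;> cases a' <;> cases b' <;> simp_all [abrPairDigit]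

def abrTerm (n : ℕ) (d : ℕ → Bool) (i : ℕ) : ℤ :=
  (-1) ^ abrEps n d i * (cond (d i) 1 0 : ℤ) * (abrB i : ℤ)

section ZeroExtended

variable {n : ℕ} {d : ℕ → Bool}

theorem abrTerm_pair (hd : ∀ i, n ≤ i → d i = false) (k : ℕ) :
    abrTerm n d (2 * k) + abrTerm n d (2 * k + 1) =
      abrPairDigit k (d (2 * k)) (d (2 * k + 1)) * 4 ^ k := by
  have heps_odd : abrEps n d (2 * k + 1) = 0 := if_neg (by omega)
  have heps_even : abrEps n d (2 * k) = if d (2 * k) ∧ d (2 * k + 1) then 1 else 0 := by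
    have htop := hd (2 * k + 1)
    unfold abrEps
    split_ifs <;> grind
  simp only [abrTerm, heps_odd, heps_even]
  cases k with
  | zero => cases d 0 <;> cases d 1 <;> simp [abrPairDigit, abrB_zero, abrB_odd 0]
  | succ k =>
    rw [abrB_even, abrB_odd]
    cases d (2 * (k + 1)) <;> cases d (2 * (k + 1) + 1) <;> simp [abrPairDigit]
    ring

theorem abrVal_eq_sum_abrPairDigit (hd : ∀ i, n ≤ i → d i = false) :
    abrVal n d = ((∑ k ∈ range n, abrPairDigit k (d (2 * k)) (d (2 * k + 1)) * 4 ^ k : ℕ) : ℤ) :=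
  calc abrVal n d = ∑ i ∈ range (2 * n), abrTerm n d i :=
        sum_subset (range_subset_range.2 (by omega)) fun i _ hi => by
          simp [hd i (by simpa using hi)]
    _ = ∑ k ∈ range n, (abrTerm n d (2 * k) + abrTerm n d (2 * k + 1)) := sum_range_two_mul _ n
    _ = _ := by
      push_cast
      exact sum_congr rfl fun k _ => abrTerm_pair hd k

end ZeroExtended

theorem extBits_of_le {n i : ℕ} (d : Fin n → Bool) (hi : n ≤ i) : extBits n d i = false :=
  dif_neg (by omega)

theorem abr_val_injective_general (n : ℕ) :
    Function.Injective (fun d : Fin n → Bool => abrVal n (extBits n d)) := by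
  intro d e h
  simp only [abrVal_eq_sum_abrPairDigit fun _ => extBits_of_le d,
    abrVal_eq_sum_abrPairDigit fun _ => extBits_of_le e, Nat.cast_inj] at h
  have hdigits := Nat.eq_of_sum_mul_pow_eq (fun k _ => abrPairDigit_lt_four k _ _)
    (fun k _ => abrPairDigit_lt_four k _ _) h
  have hbits : ∀ i, extBits n d i = extBits n e i := by
    intro i
    by_cases hi : n ≤ i
    · rw [extBits_of_le d hi, extBits_of_le e hi]
    obtain ⟨k, rfl | rfl⟩ := Nat.even_or_odd' i
    · exact (abrPairDigit_inj (hdigits k (by omega))).1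
    · exact (abrPairDigit_inj (hdigits k (by omega))).2
  funext ⟨i, hi⟩
  simpa [extBits, hi] using hbits i

theorem abr_val_injective (n : ℕ) (hn : 2 ≤ n) :
    Function.Injective (fun d : Fin n → Bool => abrVal n (extBits n d)) :=
  abr_val_injective_general n
end
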